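/- Let P and Q be partially ordered sets and let A and B be sets. Let prP : P → A, prQ : Q → B, dP : P → B, dQ : Q → A be functions such that the map y ↦ (prQ(y), dQ(y)) from Q to B × A is injective. For i = 1, 2 let fᵢ : P → Q and gᵢ : Q → P be order-reversing maps satisfying: x ≤ gᵢ(fᵢ(x)) for all x ∈ P, y ≤ fᵢ(gᵢ(y)) for all y ∈ Q, prQ(fᵢ(x)) = dP(x) for all x ∈ P, and prP(gᵢ(y)) = dQ(y) for all y ∈ Q. If the image of g₁ equals the image of g₂, then f₁ = f₂. -/
import Mathlib


/-- Two weak extended duality maps with the same special set (image of the partner map)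
coincide.  Here `prP, prQ` are the projections to orbits, `dP, dQ` are the Sommers duality
maps, and the pair `(prQ, dQ)` is assumed to be injective on `Q`. -/
theorem weak_duality_maps_with_same_special_set_agree
    {P Q A B : Type*} [PartialOrder P] [PartialOrder Q]
    (prP : P → A) (prQ : Q → B) (dP : P → B) (dQ : Q → A)
    (hinj : Function.Injective (fun y : Q => (prQ y, dQ y)))
    (f₁ f₂ : P → Q) (g₁ g₂ : Q → P)
    (hf₁ : ∀ x x' : P, x ≤ x' → f₁ x' ≤ f₁ x)
    (hg₁ : ∀ y y' : Q, y ≤ y' → g₁ y' ≤ g₁ y)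
    (hgf₁ : ∀ x : P, x ≤ g₁ (f₁ x)) (hfg₁ : ∀ y : Q, y ≤ f₁ (g₁ y))
    (hpf₁ : ∀ x : P, prQ (f₁ x) = dP x) (hpg₁ : ∀ y : Q, prP (g₁ y) = dQ y)
    (hf₂ : ∀ x x' : P, x ≤ x' → f₂ x' ≤ f₂ x)
    (hg₂ : ∀ y y' : Q, y ≤ y' → g₂ y' ≤ g₂ y)
    (hgf₂ : ∀ x : P, x ≤ g₂ (f₂ x)) (hfg₂ : ∀ y : Q, y ≤ f₂ (g₂ y))
    (hpf₂ : ∀ x : P, prQ (f₂ x) = dP x) (hpg₂ : ∀ y : Q, prP (g₂ y) = dQ y)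
    (him : Set.range g₁ = Set.range g₂) :
    f₁ = f₂ := by
  have key : ∀ (f : P → Q) (g : Q → P),
      (∀ x x' : P, x ≤ x' → f x' ≤ f x) →
      (∀ y y' : Q, y ≤ y' → g y' ≤ g y) →
      (∀ y : Q, y ≤ f (g y)) →
      ∀ x : P, ∀ z ∈ Set.range g, x ≤ z → g (f x) ≤ z := by
    intro f g hf hg hfg x z hz hxz
    obtain ⟨y, rfl⟩ := hz
    exact hg _ _ (le_trans (hfg y) (hf _ _ hxz))
  have heq : ∀ x : P, g₁ (f₁ x) = g₂ (f₂ x) := by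
    intro x
    have h1 : g₂ (f₂ x) ≤ g₁ (f₁ x) :=
      key f₂ g₂ hf₂ hg₂ hfg₂ x _ (him ▸ Set.mem_range_self _) (hgf₁ x)
    have h2 : g₁ (f₁ x) ≤ g₂ (f₂ x) :=
      key f₁ g₁ hf₁ hg₁ hfg₁ x _ (him ▸ Set.mem_range_self _) (hgf₂ x)
    exact le_antisymm h2 h1
  funext x
  apply hinj
  simp only [Prod.mk.injEq]
  refine ⟨(hpf₁ x).trans (hpf₂ x).symm, ?_⟩
  rw [← hpg₁, ← hpg₂, heq x]
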